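/- arXiv:2605.11465 — 8 statements merged into one kernel-verified Lean document; each statement's English description precedes it below -/
import Mathlib

section
/- Let q be a prime power and let r, l, k be positive integers with r dividing k and k/r ≤ l. Let f, g ∈ F_q[X] be coprime polynomials with max(deg f, deg g) = r+1 and set h = f/g. Suppose A₁, …, A_l are pairwise disjoint subsets of F_q, each of cardinality r+1, such that h is constant on each A_i with value t_i ∈ P¹(F_q), and the values t₁, …, t_l are pairwise distinct. Let A = A₁ ∪ ⋯ ∪ A_l, and let b ∈ F_q satisfy b ∉ h(P¹(F_q)) (in particular f(x) − b·g(x) ≠ 0 for all x ∈ F_q). Then the F_q-linear map F_q^k → F_q^A sending a = (a_{ij})_{0≤i≤r−1, 0≤j≤k/r−1} to the tuple (h_a(x))_{x∈A}, where h_a(x) = Σ_{i=0}^{r−1} Σ_{j=0}^{k/r−1} a_{ij}·(g(x)/(f(x) − b·g(x)))^j · x^i, is injective; equivalently, the code C = {(h_a(x))_{x∈A} : a ∈ F_q^k} is a k-dimensional F_q-linear subspace of F_q^n with n = (r+1)l. -/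
open Polynomial Finset

def ratEval {F : Type*} [Field F] [DecidableEq F] (f g : Polynomial F) :
    Option F → Option F
  | none =>
      if g.natDegree < f.natDegree then none
      else if f.natDegree = g.natDegree then some (f.leadingCoeff / g.leadingCoeff)
      else some 0
  | some x => if g.eval x = 0 then none else some (f.eval x / g.eval x)

noncomputable def encEval {F : Type*} [Field F] (f g : Polynomial F) (b : F) (r m : ℕ)
    (a : Fin r → Fin m → F) (x : F) : F :=
  ∑ i : Fin r, ∑ j : Fin m,
    a i j * (g.eval x / (f.eval x - b * g.eval x)) ^ (j : ℕ) * x ^ (i : ℕ)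

lemma vander_zero {F : Type*} [Field F] {n : ℕ} (c : Fin n → F)
    {ι : Type*} [Fintype ι] {v : ι → F} (hv : Function.Injective v)
    (hcard : n ≤ Fintype.card ι)
    (h : ∀ i, ∑ j : Fin n, c j * v i ^ (j : ℕ) = 0) : ∀ j, c j = 0 := by
  intro j
  set p : Polynomial F := ∑ j : Fin n, Polynomial.C (c j) * Polynomial.X ^ (j : ℕ) with hp
  have heval : ∀ i, p.eval (v i) = 0 := by
    intro i; simpa [p, Polynomial.eval_finset_sum] using h i
  have hdeg : p.natDegree < n := by
    have := j.2
    have hle : p.natDegree ≤ n - 1 := by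
      apply Polynomial.natDegree_sum_le_of_forall_le
      intro j' _
      exact (Polynomial.natDegree_C_mul_X_pow_le _ _).trans (Nat.le_sub_one_of_lt j'.2)
    omega
  have hp0 : p = 0 :=
    Polynomial.eq_zero_of_natDegree_lt_card_of_eval_eq_zero p hv heval (hdeg.trans_le hcard)
  have := congrArg (fun q => Polynomial.coeff q (j : ℕ)) hp0
  simpa [p, Polynomial.finset_sum_coeff, Polynomial.coeff_C_mul, Polynomial.coeff_X_pow,
    Fin.val_inj, Finset.sum_ite_eq'] using this

/-- The encoding map of the locally recoverable code built from an `(r,l)`-good rational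
function `h = f/g` is injective; equivalently, the code is a `k`-dimensional subspace of
`F_q^n` with `n = (r+1)l`. -/
theorem stmt0 {F : Type*} [Field F] [Fintype F] [DecidableEq F]
    (r l k : ℕ) (hr : 0 < r) (hl : 0 < l) (hk : 0 < k)
    (hrk : r ∣ k) (hkl : k / r ≤ l)
    (f g : Polynomial F) (hcop : IsCoprime f g)
    (hdeg : max f.natDegree g.natDegree = r + 1)
    (A : Fin l → Finset F)
    (hcard : ∀ i, (A i).card = r + 1)
    (hdisj : ∀ i j, i ≠ j → Disjoint (A i) (A j))
    (t : Fin l → Option F)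
    (hconst : ∀ i, ∀ x ∈ A i, ratEval f g (some x) = t i)
    (htinj : Function.Injective t)
    (b : F) (hb : ∀ P : Option F, ratEval f g P ≠ some b) :
    Function.Injective
      (fun (a : Fin r → Fin (k / r) → F) (x : {y : F // y ∈ Finset.univ.biUnion A}) =>
        encEval f g b r (k / r) a x.1) := by
  -- no poles of 1/(f - b g)
  have hfg : ∀ x : F, f.eval x - b * g.eval x ≠ 0 := by
    intro x h0
    have hfx : f.eval x = b * g.eval x := by linear_combination h0
    by_cases hgx : g.eval x = 0
    · obtain ⟨u, v, huv⟩ := hcop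
      have := congrArg (Polynomial.eval x) huv
      simp [hfx, hgx] at this
    · have hbx := hb (some x)
      simp only [ratEval, if_neg hgx] at hbx
      apply hbx
      rw [hfx, mul_div_assoc, div_self hgx, mul_one]
  -- every A i is nonempty
  have hAne : ∀ i, ∃ x, x ∈ A i := by
    intro i
    have h := hcard i
    rcases Finset.card_pos.mp (by rw [h]; exact Nat.succ_pos r) with ⟨x, hx⟩
    exact ⟨x, hx⟩
  have htb : ∀ i, t i ≠ some b := by
    intro i
    obtain ⟨x, hx⟩ := hAne i
    rw [← hconst i x hx]
    exact hb _
  -- the constant value of u = g/(f - bg) on A i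
  have hU : ∀ i, ∀ x ∈ A i,
      g.eval x / (f.eval x - b * g.eval x) = (t i).elim 0 (fun cc => (cc - b)⁻¹) := by
    intro i x hx
    rw [← hconst i x hx]
    by_cases hgx : g.eval x = 0
    · simp [ratEval, hgx]
    · simp only [ratEval, if_neg hgx, Option.elim]
      have h1 : f.eval x / g.eval x - b = (f.eval x - b * g.eval x) / g.eval x := by
        field_simp
      rw [h1, inv_div]
  have hUinj : Function.Injective (fun i => (t i).elim 0 (fun cc => (cc - b)⁻¹) : Fin l → F) := by
    intro i i' hii
    apply htinj
    simp only at hii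
    rcases hti : t i with _ | c <;> rcases hti' : t i' with _ | c' <;>
      rw [hti, hti'] at hii <;> simp only [Option.elim] at hii
    · exfalso
      have hc' : c' - b ≠ 0 := sub_ne_zero.mpr (by rintro rfl; exact htb i' hti')
      exact hc' (by simpa [eq_comm, inv_eq_zero] using hii)
    · exfalso
      have hc : c - b ≠ 0 := sub_ne_zero.mpr (by rintro rfl; exact htb i hti)
      exact hc (by simpa [inv_eq_zero] using hii)
    · have : c - b = c' - b := by rw [← inv_inv (c - b), hii, inv_inv]
      rw [sub_left_inj] at this
      rw [this]
  set U : Fin l → F := fun i => (t i).elim 0 (fun cc => (cc - b)⁻¹) with hUdef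
  -- main argument
  intro a a' hEq
  set c : Fin r → Fin (k / r) → F := fun i j => a i j - a' i j with hc
  have hvanish : ∀ i : Fin l, ∀ x ∈ A i,
      ∑ i' : Fin r, (∑ j : Fin (k / r), c i' j * (U i) ^ (j : ℕ)) * x ^ (i' : ℕ) = 0 := by
    intro i x hx
    have hxA : x ∈ Finset.univ.biUnion A :=
      Finset.mem_biUnion.mpr ⟨i, Finset.mem_univ i, hx⟩
    have h1 := congrFun hEq ⟨x, hxA⟩
    simp only [encEval] at h1
    have h2 : ∑ i' : Fin r, ∑ j : Fin (k / r),
        c i' j * (g.eval x / (f.eval x - b * g.eval x)) ^ (j : ℕ) * x ^ (i' : ℕ) = 0 := by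
      simp only [hc, sub_mul, Finset.sum_sub_distrib]
      exact sub_eq_zero_of_eq h1
    rw [hU i x hx] at h2
    rw [← h2]
    apply Finset.sum_congr rfl
    intro i' _
    rw [Finset.sum_mul]
  -- step 1: coefficients of powers of x vanish
  have step1 : ∀ i : Fin l, ∀ i' : Fin r,
      ∑ j : Fin (k / r), c i' j * (U i) ^ (j : ℕ) = 0 := by
    intro i
    have hv : Function.Injective (fun xx : {x // x ∈ A i} => (xx : F)) :=
      Subtype.val_injective
    apply vander_zero _ hv
    · rw [Fintype.card_coe, hcard i]; exact Nat.le_succ r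
    · intro xx
      exact hvanish i xx.1 xx.2
  -- step 2: c = 0
  have step2 : ∀ i' : Fin r, ∀ j, c i' j = 0 := by
    intro i'
    apply vander_zero (fun j => c i' j) hUinj
    · simpa using hkl
    · intro i; exact step1 i i'
  funext i j
  have h := step2 i j
  simp only [hc] at h
  exact sub_eq_zero.mp h
end

section
/- Let q be a prime power and let r, l, k be positive integers with r dividing k and k/r ≤ l. Let f, g ∈ F_q[X] be coprime polynomials with max(deg f, deg g) = r+1 and set h = f/g. Suppose A₁, …, A_l are pairwise disjoint subsets of F_q, each of cardinality r+1, such that h is constant on each A_i with value t_i ∈ P¹(F_q), and the values t₁, …, t_l are pairwise distinct. Let A = A₁ ∪ ⋯ ∪ A_l, n = (r+1)l, and let b ∈ F_q satisfy b ∉ h(P¹(F_q)). For a = (a_{ij}) ∈ F_q^k (0≤i≤r−1, 0≤j≤k/r−1) set h_a(x) = Σ_{i=0}^{r−1} Σ_{j=0}^{k/r−1} a_{ij}·(g(x)/(f(x) − b·g(x)))^j · x^i. Then for every nonzero a ∈ F_q^k, the number of x ∈ A with h_a(x) = 0 is at most k + k/r − 2; consequently every nonzero codeword of C = {(h_a(x))_{x∈A}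 : a ∈ F_q^k} has Hamming weight at least n − k − k/r + 2, i.e., the minimum distance of C is at least n − k − ⌈k/r⌉ + 2. -/
open Polynomial Finset

/-- If `D` is coprime to `g`, has positive degree, and each `p j` has degree `< deg D`,
then `∑_{j<s} p j * g^j * D^(s-1-j) = 0` forces every `p j` (for `j < s`) to vanish. -/
lemma aux_zero {F : Type*} [Field F] (D g : Polynomial F) (hcop : IsCoprime D g)
    (hD0 : 0 < D.natDegree) :
    ∀ (s : ℕ) (p : ℕ → Polynomial F), (∀ j, (p j).degree < D.degree) →
      ∑ j ∈ Finset.range s, p j * g ^ j * D ^ (s - 1 - j) = 0 → ∀ j < s, p j = 0 := by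
  intro s
  induction s with
  | zero => intro p _ _ j hj; omega
  | succ n ih =>
    intro p hdeg hsum j hj
    have hDne : D ≠ 0 := fun h => by simp [h] at hD0
    rw [Finset.sum_range_succ] at hsum
    have hexp : ∀ j : ℕ, n + 1 - 1 - j = n - j := fun j => by omega
    simp only [hexp, Nat.sub_self, pow_zero, mul_one] at hsum
    have hpn : p n = 0 := by
      have hdvdS : D ∣ ∑ j ∈ Finset.range n, p j * g ^ j * D ^ (n - j) := by
        apply Finset.dvd_sum
        intro j hjmem
        rw [Finset.mem_range] at hjmem
        exact Dvd.dvd.mul_left (dvd_pow_self D (by omega)) _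
      have hdvd : D ∣ p n * g ^ n := by
        have : p n * g ^ n = -(∑ j ∈ Finset.range n, p j * g ^ j * D ^ (n - j)) := by
          linear_combination hsum
        rw [this]
        exact dvd_neg.mpr hdvdS
      have hDpn : D ∣ p n := (hcop.pow_right).dvd_of_dvd_mul_right hdvd
      exact Polynomial.eq_zero_of_dvd_of_degree_lt hDpn (hdeg n)
    rw [hpn, zero_mul, add_zero] at hsum
    have hS : ∑ j ∈ Finset.range n, p j * g ^ j * D ^ (n - j)
        = (∑ j ∈ Finset.range n, p j * g ^ j * D ^ (n - 1 - j)) * D := by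
      rw [Finset.sum_mul]
      apply Finset.sum_congr rfl
      intro i hi
      rw [Finset.mem_range] at hi
      rw [show n - i = n - 1 - i + 1 from by omega, pow_succ]
      ring
    rw [hS] at hsum
    rcases mul_eq_zero.mp hsum with h0 | h0
    · rcases Nat.lt_succ_iff_lt_or_eq.mp hj with h | h
      · exact ih p hdeg h0 j h
      · rw [h]; exact hpn
    · exact absurd h0 hDne

/-- Every nonzero message gives a codeword with at most `k + k/r - 2` zero coordinates;
consequently every nonzero codeword has Hamming weight at least `n - k - k/r + 2`,
i.e. the minimum distance of the code is at least `n - k - ⌈k/r⌉ + 2`. -/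
theorem stmt1 {F : Type*} [Field F] [Fintype F] [DecidableEq F]
    (r l k : ℕ) (hr : 0 < r) (hl : 0 < l) (hk : 0 < k)
    (hrk : r ∣ k) (hkl : k / r ≤ l)
    (f g : Polynomial F) (hcop : IsCoprime f g)
    (hdeg : max f.natDegree g.natDegree = r + 1)
    (A : Fin l → Finset F)
    (hcard : ∀ i, (A i).card = r + 1)
    (hdisj : ∀ i j, i ≠ j → Disjoint (A i) (A j))
    (t : Fin l → Option F)
    (hconst : ∀ i, ∀ x ∈ A i, ratEval f g (some x) = t i)
    (htinj : Function.Injective t)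
    (b : F) (hb : ∀ P : Option F, ratEval f g P ≠ some b) :
    ∀ a : Fin r → Fin (k / r) → F, a ≠ 0 →
      ((Finset.univ.biUnion A).filter (fun x => encEval f g b r (k / r) a x = 0)).card
          ≤ k + k / r - 2 ∧
      (r + 1) * l - k - k / r + 2
          ≤ ((Finset.univ.biUnion A).filter (fun x => encEval f g b r (k / r) a x ≠ 0)).card := by
  have hrm : r * (k / r) = k := Nat.mul_div_cancel' hrk
  set m := k / r with hm_def
  intro a ha
  have hm : 0 < m := by
    rcases Nat.eq_zero_or_pos m with h | h
    · rw [h, mul_zero] at hrm; omega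
    · exact h
  have hkr : r ≤ k := by
    calc r = r * 1 := (mul_one r).symm
    _ ≤ r * m := Nat.mul_le_mul_left r hm
    _ = k := hrm
  set D : Polynomial F := f - Polynomial.C b * g with hD_def
  -- the degree of D is r+1
  have hDdeg : D.natDegree = r + 1 := by
    rcases lt_trichotomy f.natDegree g.natDegree with hlt | heq | hgt
    · have hgdeg : g.natDegree = r + 1 := by
        rw [max_eq_right hlt.le] at hdeg; exact hdeg
      have hbne : b ≠ 0 := by
        have h := hb none
        simp only [ratEval] at h
        rw [if_neg (by omega), if_neg (by omega)] at h
        exact fun hb0 => h (by rw [hb0])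
      have h1 : (Polynomial.C b * g).natDegree = r + 1 := by
        rw [Polynomial.natDegree_C_mul hbne, hgdeg]
      rw [hD_def, show f - Polynomial.C b * g = -(Polynomial.C b * g - f) from by ring,
        Polynomial.natDegree_neg,
        Polynomial.natDegree_sub_eq_left_of_natDegree_lt (by omega), h1]
    · have hgdeg : g.natDegree = r + 1 := by
        rw [heq, max_self] at hdeg; exact hdeg
      have hfdeg : f.natDegree = r + 1 := by rw [heq]; exact hgdeg
      have hgne : g ≠ 0 := fun h => by simp [h] at hgdeg
      have hlc : g.leadingCoeff ≠ 0 := Polynomial.leadingCoeff_ne_zero.mpr hgne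
      have h := hb none
      simp only [ratEval] at h
      rw [if_neg (by omega), if_pos heq] at h
      have hne : f.leadingCoeff ≠ b * g.leadingCoeff := by
        intro hcon
        apply h
        rw [hcon, mul_div_assoc, div_self hlc, mul_one]
      have hcoeff : D.coeff (r + 1) ≠ 0 := by
        rw [hD_def, Polynomial.coeff_sub, Polynomial.coeff_C_mul]
        have e1 : f.coeff (r + 1) = f.leadingCoeff := by
          rw [Polynomial.leadingCoeff, hfdeg]
        have e2 : g.coeff (r + 1) = g.leadingCoeff := by
          rw [Polynomial.leadingCoeff, hgdeg]
        rw [e1, e2]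
        exact sub_ne_zero.mpr hne
      refine le_antisymm ?_ (Polynomial.le_natDegree_of_ne_zero hcoeff)
      refine le_trans (Polynomial.natDegree_sub_le _ _) ?_
      refine max_le (by omega) ?_
      refine le_trans (Polynomial.natDegree_mul_le) ?_
      simp [hgdeg]
    · have hfdeg : f.natDegree = r + 1 := by
        rw [max_eq_left hgt.le] at hdeg; exact hdeg
      have h1 : (Polynomial.C b * g).natDegree < f.natDegree := by
        refine lt_of_le_of_lt ?_ hgt
        refine le_trans (Polynomial.natDegree_mul_le) ?_
        simp
      rw [hD_def, Polynomial.natDegree_sub_eq_left_of_natDegree_lt h1, hfdeg]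
  have hDne : D ≠ 0 := fun h => by simp [h] at hDdeg
  have hcopD : IsCoprime D g := by
    have := hcop.add_mul_right_left (-Polynomial.C b)
    rwa [show f + -Polynomial.C b * g = f - Polynomial.C b * g from by ring] at this
  -- D has no zero in F
  have hDevalx : ∀ x : F, D.eval x = f.eval x - b * g.eval x := by
    intro x; rw [hD_def]; simp
  have hDx : ∀ x : F, f.eval x - b * g.eval x ≠ 0 := by
    intro x
    have h := hb (some x)
    by_cases hg : g.eval x = 0
    · obtain ⟨u, v, huv⟩ := hcop
      have huv' := congrArg (Polynomial.eval x) huv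
      simp only [Polynomial.eval_add, Polynomial.eval_mul, Polynomial.eval_one, hg,
        mul_zero, add_zero] at huv'
      intro hcon
      rw [hg, mul_zero, sub_zero] at hcon
      rw [hcon, mul_zero] at huv'
      exact one_ne_zero huv'.symm
    · simp only [ratEval, if_neg hg] at h
      intro hcon
      apply h
      congr 1
      rw [div_eq_iff hg]
      linear_combination hcon
  -- the auxiliary polynomials
  set P : ℕ → Polynomial F := fun j =>
    if hj : j < m then ∑ i : Fin r, Polynomial.C (a i ⟨j, hj⟩) * Polynomial.X ^ (i : ℕ)
    else 0 with hP_def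
  have hPdegle : ∀ j, (P j).degree ≤ ((r - 1 : ℕ) : WithBot ℕ) := by
    intro j
    simp only [hP_def]
    split_ifs with hj
    · refine le_trans (Polynomial.degree_sum_le _ _) ?_
      refine Finset.sup_le ?_
      intro i _
      refine le_trans (Polynomial.degree_C_mul_X_pow_le _ _) ?_
      exact_mod_cast Nat.cast_le.mpr (by omega : (i : ℕ) ≤ r - 1)
    · simp
  have hPdeg : ∀ j, (P j).degree < D.degree := by
    intro j
    refine lt_of_le_of_lt (hPdegle j) ?_
    rw [Polynomial.degree_eq_natDegree hDne, hDdeg]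
    exact_mod_cast Nat.cast_lt.mpr (by omega : r - 1 < r + 1)
  have hPnat : ∀ j, (P j).natDegree ≤ r - 1 :=
    fun j => Polynomial.natDegree_le_iff_degree_le.mpr (hPdegle j)
  set H : Polynomial F := ∑ j ∈ Finset.range m, P j * g ^ j * D ^ (m - 1 - j) with hH_def
  -- H is nonzero
  have hHne : H ≠ 0 := by
    intro h0
    apply ha
    have hP0 := aux_zero D g hcopD (by omega) m P hPdeg (hH_def ▸ h0)
    funext i j
    have hPj : P (j : ℕ) = 0 := hP0 j j.isLt
    have hPeq : P (j : ℕ) = ∑ i : Fin r, Polynomial.C (a i j) * Polynomial.X ^ (i : ℕ) := by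
      simp only [hP_def]
      split_ifs with h
      · rfl
      · exact absurd j.isLt h
    have hc : (P (j : ℕ)).coeff (i : ℕ) = a i j := by
      rw [hPeq]
      rw [Polynomial.finset_sum_coeff]
      rw [Finset.sum_eq_single i]
      · simp
      · intro i' _ hne
        rw [Polynomial.coeff_C_mul, Polynomial.coeff_X_pow,
          if_neg (fun h => hne (Fin.val_injective h.symm)), mul_zero]
      · intro h; exact absurd (Finset.mem_univ i) h
    rw [hPj] at hc
    simp only [Polynomial.coeff_zero] at hc
    exact hc.symm
  -- degree bound on H
  have hgd : g.natDegree ≤ r + 1 := by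
    rw [← hdeg]; exact le_max_right _ _
  have hHdeg : H.natDegree ≤ k + m - 2 := by
    rw [hH_def]
    refine Polynomial.natDegree_sum_le_of_forall_le _ _ ?_
    intro j hj
    rw [Finset.mem_range] at hj
    have h1 : (P j * g ^ j * D ^ (m - 1 - j)).natDegree
        ≤ (r - 1) + j * (r + 1) + (m - 1 - j) * (r + 1) := by
      refine le_trans (Polynomial.natDegree_mul_le) ?_
      have h2 : (P j * g ^ j).natDegree ≤ (r - 1) + j * (r + 1) := by
        refine le_trans (Polynomial.natDegree_mul_le) ?_
        refine Nat.add_le_add (hPnat j) ?_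
        refine le_trans (Polynomial.natDegree_pow_le) ?_
        exact Nat.mul_le_mul_left j hgd
      refine Nat.add_le_add h2 ?_
      refine le_trans (Polynomial.natDegree_pow_le) ?_
      rw [hDdeg]
    refine le_trans h1 ?_
    have hsum : j * (r + 1) + (m - 1 - j) * (r + 1) = (m - 1) * (r + 1) := by
      rw [← add_mul, show j + (m - 1 - j) = m - 1 from by omega]
    rw [add_assoc, hsum]
    have hmr : m * (r + 1) = k + m := by rw [← hrm]; ring
    have hK : (m - 1) * (r + 1) = k + m - (r + 1) := by
      rw [Nat.sub_mul, one_mul, hmr]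
    rw [hK]
    omega
  -- evaluation identity
  have key : ∀ x : F, H.eval x
      = (f.eval x - b * g.eval x) ^ (m - 1) * encEval f g b r m a x := by
    intro x
    rw [hH_def, Polynomial.eval_finset_sum]
    rw [← Fin.sum_univ_eq_sum_range
      (fun j => Polynomial.eval x (P j * g ^ j * D ^ (m - 1 - j))) m]
    rw [encEval]
    conv_rhs => rw [Finset.sum_comm]
    rw [Finset.mul_sum]
    apply Finset.sum_congr rfl
    intro j _
    have hPeq : P (j : ℕ) = ∑ i : Fin r, Polynomial.C (a i j) * Polynomial.X ^ (i : ℕ) := by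
      simp only [hP_def]
      split_ifs with h
      · rfl
      · exact absurd j.isLt h
    rw [hPeq]
    simp only [Fin.eta, Polynomial.eval_mul, Polynomial.eval_pow, Polynomial.eval_finset_sum,
      Polynomial.eval_C, Polynomial.eval_X, hDevalx]
    rw [Finset.sum_mul, Finset.sum_mul, Finset.mul_sum]
    apply Finset.sum_congr rfl
    intro i _
    have hjle : (j : ℕ) ≤ m - 1 := by have := j.isLt; omega
    rw [pow_sub₀ _ (hDx x) hjle, div_pow]
    have hpow : ((f.eval x - b * g.eval x) ^ (j : ℕ)) ≠ 0 := pow_ne_zero _ (hDx x)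
    field_simp
  have hEvalEq : ∀ x : F, (encEval f g b r m a x = 0 ↔ H.eval x = 0) := by
    intro x
    rw [key x]
    constructor
    · intro h; rw [h, mul_zero]
    · intro h
      rcases mul_eq_zero.mp h with h | h
      · exact absurd h (pow_ne_zero _ (hDx x))
      · exact h
  -- counting zeros
  have hzero : ((Finset.univ.biUnion A).filter
      (fun x => encEval f g b r m a x = 0)).card ≤ k + m - 2 := by
    have hsub : (Finset.univ.biUnion A).filter (fun x => encEval f g b r m a x = 0)
        ⊆ H.roots.toFinset := by
      intro x hx
      rw [Finset.mem_filter] at hx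
      rw [Multiset.mem_toFinset, Polynomial.mem_roots hHne]
      exact (hEvalEq x).mp hx.2
    calc ((Finset.univ.biUnion A).filter (fun x => encEval f g b r m a x = 0)).card
        ≤ H.roots.toFinset.card := Finset.card_le_card hsub
      _ ≤ Multiset.card H.roots := Multiset.toFinset_card_le _
      _ ≤ H.natDegree := Polynomial.card_roots' H
      _ ≤ k + m - 2 := hHdeg
  refine ⟨hzero, ?_⟩
  have hcardA : (Finset.univ.biUnion A).card = (r + 1) * l := by
    rw [Finset.card_biUnion (fun i _ j _ hij => hdisj i j hij)]
    simp only [hcard, Finset.sum_const, Finset.card_univ, Fintype.card_fin, smul_eq_mul]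
    ring
  have hsplit := Finset.card_filter_add_card_filter_not
    (s := Finset.univ.biUnion A) (p := fun x => encEval f g b r m a x = 0)
  have hml : (r + 1) * m ≤ (r + 1) * l := Nat.mul_le_mul_left _ hkl
  have hmk : (r + 1) * m = k + m := by rw [← hrm]; ring
  have heq2 : ((Finset.univ.biUnion A).filter (fun x => encEval f g b r m a x ≠ 0)).card
      = ((Finset.univ.biUnion A).filter (fun x => ¬ encEval f g b r m a x = 0)).card := rfl
  rw [heq2]
  omega
end

section
/- Let q be a prime power and let r, l, k be positive integers with r dividing k and k/r ≤ l. Let f, g ∈ F_q[X] be coprime polynomials with max(deg f, deg g) = r+1 and set h = f/g. Suppose A₁, …, A_l are pairwise disjoint subsets of F_q, each of cardinality r+1, such that h is constant on each A_i with value t_i ∈ P¹(F_q), pairwise distinct. Let b ∈ F_q satisfy b ∉ h(P¹(F_q)), and for a ∈ F_q^k set h_a(x) = Σ_{i=0}^{r−1} Σ_{j=0}^{k/r−1} a_{ij}·(g(x)/(f(x) − b·g(x)))^j · x^i. Then the resulting code has locality r: for every m ∈ {1,…,l}, every x₀ ∈ A_m, and all a, a′ ∈ F_q^k, if h_a(x)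 = h_{a′}(x) for all x ∈ A_m \ {x₀}, then h_a(x₀) = h_{a′}(x₀). (Equivalently, on each A_m the function h_a agrees with a polynomial of degree at most r−1, so each coordinate indexed by A_m is determined by the other r coordinates in A_m.) -/
open Polynomial Finset

/-- The code built from an `(r,l)`-good rational function has locality `r`: on each
recovery set `A_m`, any coordinate of a codeword is determined by the other `r`
coordinates indexed by `A_m`. -/
theorem stmt2 {F : Type*} [Field F] [Fintype F] [DecidableEq F]
    (r l k : ℕ) (hr : 0 < r) (hl : 0 < l) (hk : 0 < k)
    (hrk : r ∣ k) (hkl : k / r ≤ l)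
    (f g : Polynomial F) (hcop : IsCoprime f g)
    (hdeg : max f.natDegree g.natDegree = r + 1)
    (A : Fin l → Finset F)
    (hcard : ∀ i, (A i).card = r + 1)
    (hdisj : ∀ i j, i ≠ j → Disjoint (A i) (A j))
    (t : Fin l → Option F)
    (hconst : ∀ i, ∀ x ∈ A i, ratEval f g (some x) = t i)
    (htinj : Function.Injective t)
    (b : F) (hb : ∀ P : Option F, ratEval f g P ≠ some b) :
    ∀ m : Fin l, ∀ x₀ ∈ A m, ∀ a a' : Fin r → Fin (k / r) → F,
      (∀ x ∈ A m, x ≠ x₀ →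
          encEval f g b r (k / r) a x = encEval f g b r (k / r) a' x) →
      encEval f g b r (k / r) a x₀ = encEval f g b r (k / r) a' x₀ := by
  intro m x₀ hx₀ a a' hagree
  set c : F := g.eval x₀ / (f.eval x₀ - b * g.eval x₀) with hcdef
  -- the "key" ratio is constant on A m
  have hc : ∀ x ∈ A m, g.eval x / (f.eval x - b * g.eval x) = c := by
    intro x hx
    have hx' := hconst m x hx
    have hy' := hconst m x₀ hx₀
    rw [← hy'] at hx'
    by_cases hgx : g.eval x = 0
    · by_cases hgy : g.eval x₀ = 0
      · simp [hgx, hgy, hcdef]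
      · simp [ratEval, hgx, hgy] at hx'
    · by_cases hgy : g.eval x₀ = 0
      · simp [ratEval, hgx, hgy] at hx'
      · simp only [ratEval, if_neg hgx, if_neg hgy, Option.some.injEq] at hx'
        have hx'' : f.eval x / g.eval x = f.eval x₀ / g.eval x₀ := hx'
        have hbx : f.eval x / g.eval x ≠ b := by
          have hbb := hb (some x)
          simp only [ratEval, if_neg hgx, Ne, Option.some.injEq] at hbb
          exact hbb
        have hden : f.eval x - b * g.eval x = g.eval x * (f.eval x / g.eval x - b) := by
          field_simp
        have hden' : f.eval x₀ - b * g.eval x₀ = g.eval x₀ * (f.eval x / g.eval x - b) := by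
          rw [hx'']; field_simp
        have hsub : f.eval x / g.eval x - b ≠ 0 := sub_ne_zero.mpr hbx
        rw [hcdef, hden, hden', div_mul_cancel_left₀ hgx, div_mul_cancel_left₀ hgy]
  -- the difference polynomial
  set d : Fin r → F := fun i => ∑ j : Fin (k / r), (a i j - a' i j) * c ^ (j : ℕ) with hddef
  set p : Polynomial F := ∑ i : Fin r, C (d i) * X ^ (i : ℕ) with hpdef
  have heval : ∀ x ∈ A m, p.eval x =
      encEval f g b r (k / r) a x - encEval f g b r (k / r) a' x := by
    intro x hx
    simp only [encEval, hc x hx, hpdef, hddef, eval_finset_sum, eval_mul, eval_pow, eval_C,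
      eval_X, ← Finset.sum_sub_distrib, Finset.sum_mul]
    refine Finset.sum_congr rfl fun i _ => Finset.sum_congr rfl fun j _ => by ring
  have hdegp : p.natDegree < r := by
    have h1 : p.natDegree ≤ r - 1 := by
      apply Polynomial.natDegree_sum_le_of_forall_le
      intro i _
      refine le_trans (Polynomial.natDegree_C_mul_le _ _) ?_
      simpa using Nat.le_sub_one_of_lt i.isLt
    omega
  have hzero : p = 0 := by
    apply Polynomial.eq_zero_of_natDegree_lt_card_of_eval_eq_zero' p ((A m).erase x₀)
    · intro x hx
      rw [heval x (Finset.mem_of_mem_erase hx)]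
      rw [hagree x (Finset.mem_of_mem_erase hx) (Finset.ne_of_mem_erase hx)]
      ring
    · rw [Finset.card_erase_of_mem hx₀, hcard m]
      omega
  have := heval x₀ hx₀
  rw [hzero] at this
  simp at this
  exact sub_eq_zero.mp this.symm
end

section
/- Let q be a prime power, r ≥ 1 an integer, S ⊆ F_q with #S = r+1, and a ∈ F_q \ S. Set h = (∏_{s∈S} (X − s))/(X − a) ∈ F_q(X). Then h is not equivalent to a polynomial under linear fractional transformations: there exist no α, β, γ, δ ∈ F_q with αδ − βγ ≠ 0 and no polynomial p ∈ F_q[X] such that h = (α·p + β)/(γ·p + δ) as elements of the field F_q(X) of rational functions. -/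
open Polynomial

/-- For `S ⊆ F_q` with `#S = r+1` and `a ∉ S`, the rational function
`h = ∏_{s∈S}(X-s)/(X-a)` is not equivalent to a polynomial under linear fractional
transformations: there are no `α, β, γ, δ ∈ F_q` with `αδ - βγ ≠ 0` and no polynomial
`p` such that `h = (α·p + β)/(γ·p + δ)` in `F_q(X)`. -/
theorem stmt6 {F : Type*} [Field F] [Fintype F] [DecidableEq F]
    (r : ℕ) (hr : 1 ≤ r)
    (S : Finset F) (hS : S.card = r + 1) (a : F) (ha : a ∉ S) :
    ¬ ∃ (α β γ δ : F) (p : Polynomial F), α * δ - β * γ ≠ 0 ∧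
      (algebraMap (Polynomial F) (RatFunc F) (∏ s ∈ S, (X - C s))) /
          (algebraMap (Polynomial F) (RatFunc F) (X - C a))
        = (algebraMap (Polynomial F) (RatFunc F) (C α * p + C β)) /
          (algebraMap (Polynomial F) (RatFunc F) (C γ * p + C δ)) := by
  rintro ⟨α, β, γ, δ, p, hdet, heq⟩
  set P : Polynomial F := ∏ s ∈ S, (X - C s) with hP
  have hPne : P ≠ 0 := by
    refine Finset.prod_ne_zero_iff.2 fun s _ => X_sub_C_ne_zero s
  have hXa : (X - C a : Polynomial F) ≠ 0 := X_sub_C_ne_zero a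
  have hinj := RatFunc.algebraMap_injective F
  have hBne : algebraMap (Polynomial F) (RatFunc F) (X - C a) ≠ 0 := by
    simpa using (map_ne_zero_iff _ hinj).2 hXa
  have hDpoly : (C γ * p + C δ : Polynomial F) ≠ 0 := by
    intro h0
    rw [h0] at heq
    simp only [map_zero, div_zero] at heq
    have := (div_eq_zero_iff.mp heq).resolve_right hBne
    exact hPne ((map_eq_zero_iff _ hinj).mp this)
  have hDne : algebraMap (Polynomial F) (RatFunc F) (C γ * p + C δ) ≠ 0 := by
    simpa using (map_ne_zero_iff _ hinj).2 hDpoly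
  rw [div_eq_div_iff hBne hDne, ← map_mul, ← map_mul] at heq
  have eq1 : P * (C γ * p + C δ) = (C α * p + C β) * (X - C a) := hinj heq
  -- evaluate at a
  have hPa : P.eval a ≠ 0 := by
    rw [hP, eval_prod]
    refine Finset.prod_ne_zero_iff.2 fun s hs => ?_
    simp only [eval_sub, eval_X, eval_C, sub_ne_zero]
    rintro rfl; exact ha hs
  have heval : γ * p.eval a + δ = 0 := by
    have := congrArg (eval a) eq1
    simp at this
    rcases this with h | h
    · exact absurd h hPa
    · simpa using h
  have hγ : γ ≠ 0 := by
    rintro rfl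
    simp at heval
    rw [heval] at hdet
    simp at hdet
  -- key identity
  have key : (C γ * p + C δ) * (C γ * P - C α * (X - C a))
      = (X - C a) * C (γ * β - α * δ) := by
    have : C γ * (P * (C γ * p + C δ)) - C α * (X - C a) * (C γ * p + C δ)
        = C γ * ((C α * p + C β) * (X - C a)) - C α * (X - C a) * (C γ * p + C δ) := by
      rw [eq1]
    simp only [map_sub, map_mul] at this ⊢
    linear_combination this
  -- degree contradiction
  have hQdeg : (C γ * P - C α * (X - C a)).degree = ((r + 1 : ℕ) : WithBot ℕ) := by
    have hPdeg : P.degree = ((r + 1 : ℕ) : WithBot ℕ) := by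
      rw [hP]
      rw [degree_prod]
      simp [degree_X_sub_C, hS]
    have h1 : (C γ * P).degree = ((r + 1 : ℕ) : WithBot ℕ) := by
      rw [degree_C_mul hγ, hPdeg]
    have h2 : (C α * (X - C a)).degree < ((r + 1 : ℕ) : WithBot ℕ) := by
      calc (C α * (X - C a)).degree ≤ (C α).degree + (X - C a).degree := degree_mul_le _ _
        _ ≤ 0 + 1 := add_le_add degree_C_le (degree_X_sub_C a).le
        _ < ((r + 1 : ℕ) : WithBot ℕ) := by
            rw [zero_add]
            exact_mod_cast by omega
    rw [sub_eq_add_neg, degree_add_eq_left_of_degree_lt (by rwa [degree_neg, h1]), h1]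
  have hQne : (C γ * P - C α * (X - C a)) ≠ 0 := by
    intro h0
    rw [h0, degree_zero] at hQdeg
    exact WithBot.bot_ne_coe hQdeg
  have hrhsdeg : ((X - C a) * C (γ * β - α * δ)).degree = 1 := by
    have hc : γ * β - α * δ ≠ 0 := by
      intro h; apply hdet; linear_combination -h
    rw [degree_mul, degree_X_sub_C, degree_C hc, add_zero]
  have : ((C γ * p + C δ) * (C γ * P - C α * (X - C a))).degree
      = (C γ * p + C δ).degree + ((r + 1 : ℕ) : WithBot ℕ) := by
    rw [degree_mul, hQdeg]
  rw [key, hrhsdeg] at this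
  have hd0 : (0 : WithBot ℕ) ≤ (C γ * p + C δ).degree := zero_le_degree_iff.mpr hDpoly
  have : (1 : WithBot ℕ) ≥ (0 : WithBot ℕ) + ((r + 1 : ℕ) : WithBot ℕ) := by
    rw [this]
    exact add_le_add hd0 le_rfl
  rw [zero_add] at this
  have : (r + 1 : ℕ) ≤ 1 := by exact_mod_cast this
  omega
end

section
/- Let q be a prime power, let a, b, c, d ∈ F_q with c ≠ 0 and ad − bc ≠ 0, and suppose the Möbius transformation φ(x) = (ax+b)/(cx+d) has order r+1 in PGL₂(F_q), where r ≥ 1. Let σ be the F_q-algebra automorphism of the rational function field F_q(X) determined by σ(X) = (aX+b)/(cX+d), and set h = Σ_{i=0}^{r} σ^i(X) ∈ F_q(X). Then: (1) writing h = N/D with N, D ∈ F_q[X] coprime, one has max(deg N, deg D) = r+1, i.e., deg h = r+1; and (2) the fixed field of the cyclic group ⟨σ⟩ inside F_q(X) is exactly the intermediate field F_q(h) generated by h over F_q; in particular the extension F_q(X)/F_q(h) is Galois with Galois group ⟨σ⟩ cyclic of order r+1. -/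
/-!
Write `σ^i(X)` as the Möbius transformation of `M^i`, where `M = [[a, b], [c, d]]`. Each summand
of `h` has degree at most one, so `deg h ≤ r + 1`. For `0 < i ≤ r` the lower-left entry of `M^i`
is nonzero: otherwise `M^i`, which commutes with `M` and `c ≠ 0`, would be scalar and `σ^i = 1`.
So these summands are bounded at infinity while `X` is not, and `h` is not constant. Hence
`[F(X) : F(h)] = deg h ≤ r + 1 = [F(X) : F(X)^⟨σ⟩]` by Artin's theorem, and the inclusion
`F(h) ⊆ F(X)^⟨σ⟩` is an equality.
-/

open Polynomial

theorem smul_sum_range_orderOf {M A : Type*} [Monoid M] [AddCommMonoid A] [DistribMulAction M A]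
    (g : M) (x : A) :
    g • ∑ i ∈ Finset.range (orderOf g), g ^ i • x = ∑ i ∈ Finset.range (orderOf g), g ^ i • x := by
  simp only [Finset.smul_sum, smul_smul, ← pow_succ']
  cases hg : orderOf g with
  | zero => simp
  | succ n =>
    rw [Finset.sum_range_succ (fun i => g ^ (i + 1) • x),
      Finset.sum_range_succ' (fun i => g ^ i • x), ← hg, pow_orderOf_eq_one, pow_zero]

namespace IntermediateField

variable {K L : Type*} [Field K] [Field L] [Algebra K L]

theorem finrank_fixedField_eq_natCard (H : Subgroup (L ≃ₐ[K] L)) [Finite H] :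
    Module.finrank (fixedField H) L = Nat.card H := by
  have := Fintype.ofFinite H
  rw [Nat.card_eq_fintype_card]
  exact FixedPoints.finrank_eq_card H L

theorem fixedField_eq_of_le (H : Subgroup (L ≃ₐ[K] L)) [Finite H] {E : IntermediateField K L}
    [FiniteDimensional E L] (hE : E ≤ fixedField H) (hEH : Module.finrank E L ≤ Nat.card H) :
    fixedField H = E :=
  (eq_of_le_of_finrank_le' hE (by rwa [finrank_fixedField_eq_natCard])).symm

end IntermediateField

theorem Matrix.eq_smul_one_of_commute {K : Type*} [Field K] {M N : Matrix (Fin 2) (Fin 2) K}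
    (hM : M 1 0 ≠ 0) (hMN : Commute M N) (hN : N 1 0 = 0) : N = N 0 0 • 1 := by
  have h := congrFun₂ hMN.eq
  have h00 := h 0 0
  have h10 := h 1 0
  simp only [Matrix.mul_apply, Fin.sum_univ_two, hN] at h00 h10
  have hdiag : N 1 1 = N 0 0 := mul_left_cancel₀ hM (by linear_combination -h10)
  have hoff : N 0 1 = 0 := (mul_eq_zero.mp (by linear_combination -h00)).resolve_right hM
  ext i j
  fin_cases i <;> fin_cases j <;> simp [hN, hdiag, hoff]

namespace RatFunc

variable {K : Type*} [Field K]

noncomputable def natDegree (f : RatFunc K) : ℕ := max f.num.natDegree f.denom.natDegree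

theorem algEquiv_eq_one_of_apply_X {τ : RatFunc K ≃ₐ[K] RatFunc K} (hτ : τ X = X) : τ = 1 := by
  have hpoly (p : K[X]) : τ (algebraMap K[X] (RatFunc K) p) = algebraMap K[X] (RatFunc K) p := by
    rw [← aeval_X_left_eq_algebraMap]
    exact (aeval_algHom_apply τ.toAlgHom X p).symm.trans (by simp [hτ])
  ext f
  rw [← num_div_denom f, map_div₀, hpoly, hpoly, AlgEquiv.one_apply]

theorem intDegree_sum_nonpos {ι : Type*} (s : Finset ι) {f : ι → RatFunc K}
    (hf : ∀ i ∈ s, (f i).intDegree ≤ 0) : (∑ i ∈ s, f i).intDegree ≤ 0 := by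
  induction s using Finset.cons_induction with
  | empty => simp
  | cons a s ha ih =>
    rw [Finset.sum_cons]
    have hs := ih fun i hi => hf i (Finset.mem_cons_of_mem hi)
    by_cases hsum : f a + ∑ i ∈ s, f i = 0
    · rw [hsum, intDegree_zero]
    by_cases hs0 : ∑ i ∈ s, f i = 0
    · simpa [hs0] using hf a (Finset.mem_cons_self a s)
    exact (intDegree_add_le hs0 hsum).trans (max_le (hf a (Finset.mem_cons_self a s)) hs)

theorem intDegree_X_add {f : RatFunc K} (hf : f.intDegree ≤ 0) : (X + f).intDegree = 1 := by
  have hXf : X + f ≠ 0 := fun h0 => by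
    rw [show f = -X by linear_combination h0, intDegree_neg, intDegree_X] at hf
    omega
  by_cases hf0 : f = 0
  · simp [hf0]
  have hle : (X + f).intDegree ≤ max (X : RatFunc K).intDegree f.intDegree :=
    intDegree_add_le hf0 hXf
  have hge := intDegree_add_le (x := X + f) (neg_ne_zero.mpr hf0)
    (by rw [add_neg_cancel_right]; exact X_ne_zero)
  rw [add_neg_cancel_right] at hge
  rw [intDegree_X, intDegree_neg] at *
  omega

theorem natDegree_div_le (p q : K[X]) :
    (algebraMap K[X] (RatFunc K) p / algebraMap K[X] (RatFunc K) q).natDegree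
      ≤ max p.natDegree q.natDegree := by
  by_cases hq : q = 0
  · simp [hq, natDegree]
  by_cases hp : p = 0
  · simp [hp, natDegree]
  exact max_le_max (natDegree_le_of_dvd (num_div_dvd p hq) hp)
    (natDegree_le_of_dvd (denom_div_dvd p q) hq)

theorem natDegree_add_le (f g : RatFunc K) : (f + g).natDegree ≤ f.natDegree + g.natDegree := by
  have hfg : f + g = algebraMap K[X] (RatFunc K) (f.num * g.denom + f.denom * g.num) /
      algebraMap K[X] (RatFunc K) (f.denom * g.denom) := by
    rw [map_add, map_mul, map_mul, map_mul, ← div_add_div _ _ (algebraMap_ne_zero f.denom_ne_zero)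
      (algebraMap_ne_zero g.denom_ne_zero), num_div_denom, num_div_denom]
  rw [hfg]
  refine (natDegree_div_le _ _).trans (max_le ((Polynomial.natDegree_add_le _ _).trans
    (max_le (natDegree_mul_le_of_le ?_ ?_) (natDegree_mul_le_of_le ?_ ?_)))
    (natDegree_mul_le_of_le ?_ ?_)) <;>
  simp only [natDegree, le_max_left, le_max_right]

theorem natDegree_sum_le {ι : Type*} (s : Finset ι) (f : ι → RatFunc K) :
    (∑ i ∈ s, f i).natDegree ≤ ∑ i ∈ s, (f i).natDegree := by
  induction s using Finset.cons_induction with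
  | empty => simp [natDegree]
  | cons a s ha ih =>
    rw [Finset.sum_cons, Finset.sum_cons]
    exact (natDegree_add_le _ _).trans (by omega)

noncomputable def mobius (M : Matrix (Fin 2) (Fin 2) K) : RatFunc K :=
  (C (M 0 0) * X + C (M 0 1)) / (C (M 1 0) * X + C (M 1 1))

theorem C_mul_X_add_C (a b : K) :
    C a * X + C b =
      algebraMap K[X] (RatFunc K) (Polynomial.C a * Polynomial.X + Polynomial.C b) := by
  simp [algebraMap_C, algebraMap_X]

theorem C_mul_X_add_C_ne_zero {a : K} (ha : a ≠ 0) (b : K) : C a * X + C b ≠ 0 := by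
  rw [C_mul_X_add_C]
  refine algebraMap_ne_zero fun h => ?_
  simpa [h] using natDegree_linear ha (b := b)

theorem natDegree_mobius_le (M : Matrix (Fin 2) (Fin 2) K) : (mobius M).natDegree ≤ 1 := by
  rw [mobius, C_mul_X_add_C, C_mul_X_add_C]
  exact (natDegree_div_le _ _).trans (max_le natDegree_linear_le natDegree_linear_le)

theorem intDegree_mobius_nonpos {M : Matrix (Fin 2) (Fin 2) K} (hM : M 1 0 ≠ 0) :
    (mobius M).intDegree ≤ 0 := by
  by_cases hnum : C (M 0 0) * X + C (M 0 1) = 0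
  · simp [mobius, hnum]
  rw [mobius, intDegree_div hnum (C_mul_X_add_C_ne_zero hM _), C_mul_X_add_C, C_mul_X_add_C,
    intDegree_polynomial, intDegree_polynomial, natDegree_linear hM]
  have : (Polynomial.C (M 0 0) * Polynomial.X + Polynomial.C (M 0 1)).natDegree ≤ 1 :=
    natDegree_linear_le
  omega

@[simp]
theorem mobius_one : mobius (1 : Matrix (Fin 2) (Fin 2) K) = X := by
  simp [mobius]

theorem mobius_smul {p : K} (hp : p ≠ 0) (M : Matrix (Fin 2) (Fin 2) K) :
    mobius (p • M) = mobius M := by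
  simp only [mobius, Matrix.smul_apply, smul_eq_mul, map_mul, mul_assoc, ← mul_add]
  exact mul_div_mul_left _ _ (by simpa using hp)

theorem map_mobius {τ : RatFunc K →ₐ[K] RatFunc K} {N : Matrix (Fin 2) (Fin 2) K}
    (hN : N 1 0 ≠ 0) (hτ : τ X = mobius N) (P : Matrix (Fin 2) (Fin 2) K) :
    τ (mobius P) = mobius (P * N) := by
  have hA := C_mul_X_add_C_ne_zero hN (N 1 1)
  have hcomp (p q : K) : C p * τ X + C q =
      (C p * (C (N 0 0) * X + C (N 0 1)) + C q * (C (N 1 0) * X + C (N 1 1))) /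
        (C (N 1 0) * X + C (N 1 1)) := by
    rw [hτ, mobius, mul_div_assoc', div_add' _ _ _ hA, mul_comm (C q)]
  simp only [mobius, map_div₀, map_add, map_mul, ← algebraMap_eq_C, AlgHom.commutes]
  simp only [algebraMap_eq_C, hcomp, div_div_div_cancel_right₀ hA, Matrix.mul_apply,
    Fin.sum_univ_two, map_add, map_mul]
  congr 1 <;> ring

theorem pow_apply_X {τ : RatFunc K ≃ₐ[K] RatFunc K} {M : Matrix (Fin 2) (Fin 2) K}
    (hM : M 1 0 ≠ 0) (hτ : τ X = mobius M) (n : ℕ) : (τ ^ n) X = mobius (M ^ n) := by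
  induction n with
  | zero => simp
  | succ n ih =>
    rw [pow_succ', AlgEquiv.mul_apply, ih, pow_succ]
    exact map_mobius (τ := τ.toAlgHom) hM hτ _

theorem lower_left_pow_ne_zero {σ : RatFunc K ≃ₐ[K] RatFunc K}
    {M : Matrix (Fin 2) (Fin 2) K} (hM : M 1 0 ≠ 0) (hσ : σ X = mobius M) {i : ℕ} (hi0 : i ≠ 0)
    (hi : i < orderOf σ) : (M ^ i) 1 0 ≠ 0 := by
  intro h0
  have hscalar := Matrix.eq_smul_one_of_commute hM (Commute.self_pow M i) h0
  have hσi := pow_apply_X hM hσ i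
  by_cases hp : (M ^ i) 0 0 = 0
  · rw [hscalar, hp, zero_smul] at hσi
    exact X_ne_zero ((map_eq_zero_iff _ (σ ^ i).injective).mp (hσi.trans (by simp [mobius])))
  · rw [hscalar, mobius_smul hp, mobius_one] at hσi
    exact pow_ne_one_of_lt_orderOf hi0 hi (algEquiv_eq_one_of_apply_X hσi)

end RatFunc

open RatFunc IntermediateField

theorem stmt11_general {F : Type*} [Field F]
    (a b c d : F) (hc : c ≠ 0)
    (r : ℕ)
    (σ : RatFunc F ≃ₐ[F] RatFunc F)
    (hσ : σ RatFunc.X =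
      (algebraMap F (RatFunc F) a * RatFunc.X + algebraMap F (RatFunc F) b) /
        (algebraMap F (RatFunc F) c * RatFunc.X + algebraMap F (RatFunc F) d))
    (hord : orderOf σ = r + 1)
    (h : RatFunc F) (hh : h = ∑ i ∈ Finset.range (r + 1), (σ ^ i) RatFunc.X) :
    max h.num.natDegree h.denom.natDegree = r + 1 ∧
    IntermediateField.fixedField (Subgroup.zpowers σ) = IntermediateField.adjoin F {h} := by
  set M : Matrix (Fin 2) (Fin 2) F := !![a, b; c, d]
  have hM : M 1 0 ≠ 0 := hc
  have hσM : σ X = mobius M := by simp [hσ, mobius, M, algebraMap_eq_C]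
  have hdeg : h.natDegree ≤ r + 1 :=
    calc h.natDegree ≤ ∑ i ∈ Finset.range (r + 1), ((σ ^ i) X).natDegree :=
          hh ▸ RatFunc.natDegree_sum_le _ _
      _ ≤ ∑ i ∈ Finset.range (r + 1), 1 := Finset.sum_le_sum fun i _ => by
          rw [pow_apply_X hM hσM]
          exact natDegree_mobius_le _
      _ = r + 1 := by simp
  have hintDeg : h.intDegree = 1 := by
    rw [hh, Finset.sum_range_succ', pow_zero, AlgEquiv.one_apply, add_comm]
    refine intDegree_X_add (intDegree_sum_nonpos _ fun i hi => ?_)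
    rw [pow_apply_X hM hσM]
    exact intDegree_mobius_nonpos (lower_left_pow_ne_zero hM hσM i.succ_ne_zero
      (by rw [hord]; simpa using hi))
  have hσh : σ h = h := by
    simpa only [hh, hord, AlgEquiv.smul_def] using smul_sum_range_orderOf σ (X : RatFunc F)
  have hfix : F⟮h⟯ ≤ fixedField (Subgroup.zpowers σ) :=
    adjoin_simple_le_iff.mpr fun τ => Subgroup.zpowers_le.mpr
      (MulAction.mem_stabilizer_iff.mpr hσh : σ ∈ MulAction.stabilizer _ h) τ.2
  have hfinrank : Module.finrank F⟮h⟯ (RatFunc F) = h.natDegree := finrank_eq_max_natDegree h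
  have hpos : 0 < h.natDegree := by
    rw [intDegree] at hintDeg
    exact lt_max_of_lt_left (by omega)
  have := Module.finite_of_finrank_pos (hfinrank ▸ hpos)
  have hcard : Nat.card (Subgroup.zpowers σ) = r + 1 := by rw [Nat.card_zpowers, hord]
  have := Nat.finite_of_card_ne_zero (by omega : Nat.card (Subgroup.zpowers σ) ≠ 0)
  have hfixed := fixedField_eq_of_le _ hfix (by rwa [hfinrank, hcard])
  refine ⟨?_, hfixed⟩
  change h.natDegree = r + 1
  rw [← hfinrank, ← hfixed, finrank_fixedField_eq_natCard, hcard]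

/-- Let `φ(x) = (ax+b)/(cx+d)` (with `c ≠ 0`, `ad - bc ≠ 0`) be a non-affine Möbius
transformation of order `r+1` in `PGL₂(F_q)`, let `σ` be the `F_q`-algebra automorphism
of `F_q(X)` with `σ(X) = (aX+b)/(cX+d)`, and set `h = Σ_{i=0}^{r} σ^i(X)`.  Then
`deg h = max(deg num h, deg denom h) = r + 1`, and the fixed field of `⟨σ⟩` in
`F_q(X)` is exactly `F_q(h)`; in particular `F_q(X)/F_q(h)` is Galois with cyclic
Galois group `⟨σ⟩` of order `r+1`. -/
theorem stmt11 {F : Type*} [Field F] [Fintype F]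
    (a b c d : F) (hc : c ≠ 0) (hdet : a * d - b * c ≠ 0)
    (r : ℕ) (hr : 1 ≤ r)
    (σ : RatFunc F ≃ₐ[F] RatFunc F)
    (hσ : σ RatFunc.X =
      (algebraMap F (RatFunc F) a * RatFunc.X + algebraMap F (RatFunc F) b) /
        (algebraMap F (RatFunc F) c * RatFunc.X + algebraMap F (RatFunc F) d))
    (hord : orderOf σ = r + 1)
    (h : RatFunc F) (hh : h = ∑ i ∈ Finset.range (r + 1), (σ ^ i) RatFunc.X) :
    max h.num.natDegree h.denom.natDegree = r + 1 ∧
    IntermediateField.fixedField (Subgroup.zpowers σ) = IntermediateField.adjoin F {h} :=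
  stmt11_general a b c d hc r σ hσ hord h hh
end

section
/- Let q be a prime power and w ∈ F_q with w ≠ 0. Set h = (X³ − 3w²X + w³)/(X(X − w)) ∈ F_q(X). Then the extension F_q(X)/F_q(h) is Galois of degree 3; its Galois group is the cyclic group of order 3 generated by the F_q-algebra automorphism of F_q(X) sending X to w²/(w − X). -/
/-!
Since `σ` fixes constants, `σ² X = w (X - w) / X` and `σ³ X = X`, while `σ X ≠ X`; so `σ` has
order `3`, and by Artin's theorem `F(X)` is Galois of degree `3` over the fixed field of `⟨σ⟩`.
A direct computation gives `σ h = h`, so `F(h)` lies in that fixed field. Conversely, writing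
`h = p / q` with `deg p = 3 > deg q`, `X` is a root of `p - h q`, so `[F(X) : F(h)] ≤ 3`, which
forces `F(h)` to be the whole fixed field.
-/

open Polynomial
open scoped RatFunc IntermediateField

theorem RatFunc.algHom_ext {K L : Type*} [Field K] [Semiring L] [Algebra K L]
    {f g : K⟮X⟯ →ₐ[K] L} (h : f RatFunc.X = g RatFunc.X) : f = g :=
  IsLocalization.algHom_ext (nonZeroDivisors K[X]) <| Polynomial.algHom_ext <| by
    change f (algebraMap K[X] K⟮X⟯ Polynomial.X) = g (algebraMap K[X] K⟮X⟯ Polynomial.X)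
    rwa [algebraMap_X]

theorem sq_div_sub_sub {K : Type*} [Field K] {c x : K} (h : c - x ≠ 0) :
    c ^ 2 / (c - x) - c = c * x / (c - x) := by
  field_simp
  ring

namespace IntermediateField

variable {F E : Type*} [Field F] [Field E] [Algebra F E] (H : Subgroup (E ≃ₐ[F] E)) [Finite H]

theorem finrank_fixedField_eq_card_of_finite : Module.finrank (fixedField H) E = Nat.card H := by
  have := Fintype.ofFinite H
  rw [Nat.card_eq_fintype_card]
  exact FixedPoints.finrank_eq_card H E

instance isGalois_fixedField : IsGalois (fixedField H) E :=
  inferInstanceAs (IsGalois (FixedPoints.subfield H E) E)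

theorem eq_fixedField_of_le_of_finrank_le {K : IntermediateField F E} [FiniteDimensional K E]
    (hK : K ≤ fixedField H) (hKH : Module.finrank K E ≤ Nat.card H) : K = fixedField H :=
  eq_of_le_of_finrank_le' hK (by rwa [finrank_fixedField_eq_card_of_finite])

theorem mem_fixedField_zpowers_iff {σ : E ≃ₐ[F] E} {x : E} :
    x ∈ fixedField (Subgroup.zpowers σ) ↔ σ x = x := by
  rw [mem_fixedField_iff]
  refine ⟨fun h ↦ h σ (Subgroup.mem_zpowers σ), fun h g hg ↦ ?_⟩
  exact Subgroup.zpowers_le.mpr (show σ ∈ MulAction.stabilizer _ x from h) hg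

end IntermediateField

namespace RatFunc

variable {K : Type*} [Field K]

theorem finiteDimensional_adjoin {f : K⟮X⟯} (hf : ¬∃ c, f = C c) :
    FiniteDimensional K⟮f⟯ K⟮X⟯ := by
  have := IntermediateField.adjoin.finiteDimensional (f.isAlgebraic_adjoin_simple_X hf).isIntegral
  exact (IntermediateField.adjoinXEquiv K⟮f⟯).toLinearEquiv.finiteDimensional

theorem finrank_adjoin_div_le (p : K[X]) {q : K[X]} (hq : q ≠ 0) :
    Module.finrank K⟮algebraMap K[X] K⟮X⟯ p / algebraMap K[X] K⟮X⟯ q⟯ K⟮X⟯ ≤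
      max p.natDegree q.natDegree := by
  rw [finrank_eq_max_natDegree]
  rcases eq_or_ne p 0 with rfl | hp
  · simp
  exact max_le_max (natDegree_le_of_dvd (num_div_dvd p hq) hp)
    (natDegree_le_of_dvd (denom_div_dvd p q) hq)

theorem not_exists_div_eq_C {p q : K[X]} (hq : q ≠ 0) (hpq : q.natDegree < p.natDegree) :
    ¬∃ c, algebraMap K[X] K⟮X⟯ p / algebraMap K[X] K⟮X⟯ q = C c := by
  rintro ⟨c, h⟩
  rw [div_eq_iff (algebraMap_ne_zero hq), ← algebraMap_C, ← map_mul] at h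
  have := (algebraMap_injective K h).symm ▸ natDegree_C_mul_le c q
  omega

theorem algebraMap_sub_X_ne_zero (a : K) : algebraMap K K⟮X⟯ a - X ≠ 0 := by
  rw [algebraMap_eq_C, ← algebraMap_C, ← algebraMap_X, ← map_sub]
  exact algebraMap_ne_zero (sub_ne_zero.2 (X_ne_C a).symm)

variable {w : K} {σ : K⟮X⟯ ≃ₐ[K] K⟮X⟯}

theorem mobius_apply_apply_X (hw : w ≠ 0)
    (hσ : σ X = algebraMap K K⟮X⟯ (w ^ 2) / (algebraMap K K⟮X⟯ w - X)) :
    σ (σ X) = algebraMap K K⟮X⟯ w * (X - algebraMap K K⟮X⟯ w) / X := by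
  rw [map_pow] at hσ
  have hcX := algebraMap_sub_X_ne_zero w
  have hc : algebraMap K K⟮X⟯ w ≠ 0 := by simpa using hw
  have hX : (X : K⟮X⟯) ≠ 0 := X_ne_zero
  rw [hσ, map_div₀, map_sub, map_pow, AlgEquiv.commutes, hσ, ← neg_sub, sq_div_sub_sub hcX]
  field_simp
  ring

theorem mobius_pow_three (hw : w ≠ 0)
    (hσ : σ X = algebraMap K K⟮X⟯ (w ^ 2) / (algebraMap K K⟮X⟯ w - X)) : σ ^ 3 = 1 := by
  refine AlgEquiv.coe_toAlgHom_injective (algHom_ext ?_)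
  change σ (σ (σ X)) = X
  have hcX := algebraMap_sub_X_ne_zero w
  have hc : algebraMap K K⟮X⟯ w ≠ 0 := by simpa using hw
  have hX : (X : K⟮X⟯) ≠ 0 := X_ne_zero
  rw [mobius_apply_apply_X hw hσ, map_div₀, map_mul, map_sub, AlgEquiv.commutes, hσ, map_pow,
    sq_div_sub_sub hcX]
  field_simp

theorem mobius_ne_one (hw : w ≠ 0)
    (hσ : σ X = algebraMap K K⟮X⟯ (w ^ 2) / (algebraMap K K⟮X⟯ w - X)) : σ ≠ 1 := by
  rintro rfl
  rw [AlgEquiv.one_apply, eq_div_iff (algebraMap_sub_X_ne_zero w), algebraMap_eq_C,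
    ← algebraMap_C, ← algebraMap_C, ← algebraMap_X, ← map_sub, ← map_mul] at hσ
  have h0 : 0 = w ^ 2 := by simpa using congr_arg (Polynomial.eval 0) (algebraMap_injective K hσ)
  exact pow_ne_zero 2 hw h0.symm

theorem orderOf_mobius (hw : w ≠ 0)
    (hσ : σ X = algebraMap K K⟮X⟯ (w ^ 2) / (algebraMap K K⟮X⟯ w - X)) : orderOf σ = 3 :=
  have : Fact (Nat.Prime 3) := ⟨Nat.prime_three⟩
  orderOf_eq_prime (mobius_pow_three hw hσ) (mobius_ne_one hw hσ)

theorem mobius_apply_cubic (hw : w ≠ 0)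
    (hσ : σ X = algebraMap K K⟮X⟯ (w ^ 2) / (algebraMap K K⟮X⟯ w - X)) :
    σ ((X ^ 3 - algebraMap K K⟮X⟯ (3 * w ^ 2) * X + algebraMap K K⟮X⟯ (w ^ 3)) /
        (X * (X - algebraMap K K⟮X⟯ w))) =
      (X ^ 3 - algebraMap K K⟮X⟯ (3 * w ^ 2) * X + algebraMap K K⟮X⟯ (w ^ 3)) /
        (X * (X - algebraMap K K⟮X⟯ w)) := by
  simp only [map_pow, map_mul, map_ofNat] at hσ ⊢
  have hcX := algebraMap_sub_X_ne_zero w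
  have hXc : X - algebraMap K K⟮X⟯ w ≠ 0 := by rw [← neg_sub]; exact neg_ne_zero.2 hcX
  have hc : algebraMap K K⟮X⟯ w ≠ 0 := by simpa using hw
  have hX : (X : K⟮X⟯) ≠ 0 := X_ne_zero
  simp only [map_div₀, map_add, map_sub, map_mul, map_pow, map_ofNat, AlgEquiv.commutes, hσ,
    sq_div_sub_sub hcX]
  field_simp
  ring

theorem cubic_div_eq_algebraMap_div (w : K) :
    (X ^ 3 - algebraMap K K⟮X⟯ (3 * w ^ 2) * X + algebraMap K K⟮X⟯ (w ^ 3)) /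
        (X * (X - algebraMap K K⟮X⟯ w)) =
      algebraMap K[X] K⟮X⟯ (Polynomial.X ^ 3 - Polynomial.C (3 * w ^ 2) * Polynomial.X +
          Polynomial.C (w ^ 3)) /
        algebraMap K[X] K⟮X⟯ (Polynomial.X * (Polynomial.X - Polynomial.C w)) := by
  simp [algebraMap_eq_C]

end RatFunc

theorem stmt12_general {F : Type*} [Field F] (w : F) (hw : w ≠ 0)
    (σ : RatFunc F ≃ₐ[F] RatFunc F)
    (hσ : σ RatFunc.X =
      algebraMap F (RatFunc F) (w ^ 2) / (algebraMap F (RatFunc F) w - RatFunc.X))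
    (h : RatFunc F)
    (hh : h = (RatFunc.X ^ 3 - algebraMap F (RatFunc F) (3 * w ^ 2) * RatFunc.X
          + algebraMap F (RatFunc F) (w ^ 3)) /
        (RatFunc.X * (RatFunc.X - algebraMap F (RatFunc F) w))) :
    IsGalois (IntermediateField.adjoin F {h}) (RatFunc F) ∧
    Module.finrank (IntermediateField.adjoin F {h}) (RatFunc F) = 3 ∧
    orderOf σ = 3 ∧
    IntermediateField.fixedField (Subgroup.zpowers σ) = IntermediateField.adjoin F {h} := by
  have hord := RatFunc.orderOf_mobius hw hσ
  have hcard : Nat.card (Subgroup.zpowers σ) = 3 := by rw [Nat.card_zpowers, hord]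
  have : Finite (Subgroup.zpowers σ) := Nat.finite_of_card_ne_zero (by rw [hcard]; norm_num)
  have hfix : h ∈ IntermediateField.fixedField (Subgroup.zpowers σ) :=
    IntermediateField.mem_fixedField_zpowers_iff.2 (hh ▸ RatFunc.mobius_apply_cubic hw hσ)
  obtain ⟨p, q, hq, hp, hqp, rfl⟩ : ∃ p q : F[X], q ≠ 0 ∧ p.natDegree = 3 ∧
      q.natDegree ≤ 2 ∧ h = algebraMap F[X] (RatFunc F) p / algebraMap F[X] (RatFunc F) q :=
    ⟨_, _, mul_ne_zero X_ne_zero (X_sub_C_ne_zero w), by compute_degree!, by compute_degree,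
      hh.trans (RatFunc.cubic_div_eq_algebraMap_div w)⟩
  have := RatFunc.finiteDimensional_adjoin (RatFunc.not_exists_div_eq_C (p := p) hq (by omega))
  have heq := IntermediateField.eq_fixedField_of_le_of_finrank_le _
    (IntermediateField.adjoin_simple_le_iff.2 hfix)
    (hcard ▸ (RatFunc.finrank_adjoin_div_le p hq).trans (max_le hp.le (by omega)))
  rw [heq, IntermediateField.finrank_fixedField_eq_card_of_finite, hcard]
  exact ⟨inferInstance, rfl, hord, rfl⟩

/-- Let `w ∈ F_q*` and `h = (X³ - 3w²X + w³)/(X(X - w)) ∈ F_q(X)`.  Then the extension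
`F_q(X)/F_q(h)` is Galois of degree `3`, and its Galois group is the cyclic group of
order `3` generated by the `F_q`-algebra automorphism `σ` of `F_q(X)` with
`σ(X) = w²/(w - X)`: `σ` has order `3` and the fixed field of `⟨σ⟩` is `F_q(h)`. -/
theorem stmt12 {F : Type*} [Field F] [Fintype F] (w : F) (hw : w ≠ 0)
    (σ : RatFunc F ≃ₐ[F] RatFunc F)
    (hσ : σ RatFunc.X =
      algebraMap F (RatFunc F) (w ^ 2) / (algebraMap F (RatFunc F) w - RatFunc.X))
    (h : RatFunc F)
    (hh : h = (RatFunc.X ^ 3 - algebraMap F (RatFunc F) (3 * w ^ 2) * RatFunc.X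
          + algebraMap F (RatFunc F) (w ^ 3)) /
        (RatFunc.X * (RatFunc.X - algebraMap F (RatFunc F) w))) :
    IsGalois (IntermediateField.adjoin F {h}) (RatFunc F) ∧
    Module.finrank (IntermediateField.adjoin F {h}) (RatFunc F) = 3 ∧
    orderOf σ = 3 ∧
    IntermediateField.fixedField (Subgroup.zpowers σ) = IntermediateField.adjoin F {h} :=
  stmt12_general w hw σ hσ h hh
end

section
/- Let q be a prime power and w ∈ F_q with w ≠ 0. Set h = (X³ − 3w²X + w³)/(X(X − w)), viewed as a map h : P¹(F_q) → P¹(F_q). Then the number of points b ∈ P¹(F_q) whose fiber h⁻¹(b) has exactly 3 elements equals: q/3 if q ≡ 0 (mod 3); (q−1)/3 if q ≡ 1 (mod 3); and (q+1)/3 if q ≡ 2 (mod 3). In particular, h is (2, l)-good with l = q/3, (q−1)/3, (q+1)/3 in the respective cases. -/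
/-!
The Möbius transformation `σ = deck w : x ↦ w (x - w) / x` has order `3` on `P¹`, cycles the
poles `∞ ↦ w ↦ 0 ↦ ∞` of `h`, and satisfies `h ∘ σ = h`. As `deg h = 3`, a fibre of `h`
containing a point moved by `σ` is exactly its orbit, and every other fibre consists of fixed
points of `σ`, i.e. roots of `x² - w x + w²`, so it has at most two points. Hence the moved
points are partitioned into the fibres of size `3`, and `3 N + #Fix(σ) = q + 1` with
`#Fix(σ) ≤ 2`, which forces `N = ⌊(q + 1) / 3⌋`.
-/

open Polynomial Finset

section OrderThree

variable {α β : Type*} {σ : α → α}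

lemma card_orbit_of_apply_ne [DecidableEq α] (hσ : ∀ x, σ (σ (σ x)) = x) {x : α}
    (hx : σ x ≠ x) : #{x, σ x, σ (σ x)} = 3 := by
  have hinj : σ.Injective := Function.LeftInverse.injective (g := σ ∘ σ) hσ
  have h2 : σ (σ x) ≠ x := fun h => hx (by simpa [hσ] using (congrArg σ h).symm)
  rw [card_insert_of_notMem (by simp [Ne.symm hx, Ne.symm h2]),
    card_pair (Ne.symm (hinj.isFixedPt_apply_iff.not.2 hx))]

variable [Fintype α] [DecidableEq α] [DecidableEq β] {f : α → β}

lemma card_moved_in_fiber (hσ : ∀ x, σ (σ (σ x)) = x) (hf : ∀ x, f (σ x) = f x)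
    (hfib : ∀ b, #{x | f x = b} ≤ 3) (hfix : #{x | σ x = x} ≤ 2) (b : β) :
    #{x | f x = b ∧ σ x ≠ x} = if #{x | f x = b} = 3 then 3 else 0 := by
  by_cases hb : ∃ u, f u = b ∧ σ u ≠ u
  · obtain ⟨u, rfl, hu⟩ := hb
    have hinj : σ.Injective := Function.LeftInverse.injective (g := σ ∘ σ) hσ
    have h2 : σ (σ u) ≠ σ u := hinj.isFixedPt_apply_iff.not.2 hu
    have h3 : σ (σ (σ u)) ≠ σ (σ u) := hinj.isFixedPt_apply_iff.not.2 h2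
    have horbit : {u, σ u, σ (σ u)} ⊆ ({x | f x = f u ∧ σ x ≠ x} : Finset α) := by
      simp [insert_subset_iff, hf, hu, h2, h3]
    have hmoved_le : #{x | f x = f u ∧ σ x ≠ x} ≤ #{x | f x = f u} :=
      card_le_card fun x => by simp +contextual
    have horbit_le := card_le_card horbit
    rw [card_orbit_of_apply_ne hσ hu] at horbit_le
    have hfib_u := hfib (f u)
    rw [if_pos (by omega)]
    omega
  · push Not at hb
    have hsub : ({x | f x = b} : Finset α) ⊆ ({x | σ x = x} : Finset α) :=
      fun x => by simpa using hb x
    have hfib_le := card_le_card hsub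
    rw [if_neg (by omega), card_eq_zero, filter_eq_empty_iff]
    exact fun x _ h => h.2 (hb x h.1)

lemma three_mul_card_fibers_add_card_fixed [Fintype β] (hσ : ∀ x, σ (σ (σ x)) = x)
    (hf : ∀ x, f (σ x) = f x) (hfib : ∀ b, #{x | f x = b} ≤ 3) (hfix : #{x | σ x = x} ≤ 2) :
    3 * #{b | #{x | f x = b} = 3} + #{x | σ x = x} = Fintype.card α := by
  have hmoved : #{x | σ x ≠ x} = 3 * #{b | #{x | f x = b} = 3} := by
    rw [card_eq_sum_card_fiberwise (f := f) (t := univ) (fun _ _ => mem_coe.2 (mem_univ _))]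
    simp_rw [filter_filter, and_comm (a := σ _ ≠ _), card_moved_in_fiber hσ hf hfib hfix]
    rw [sum_ite, sum_const_zero, sum_const, smul_eq_mul, add_zero, mul_comm]
  rw [← hmoved, ← card_univ, add_comm, card_filter_add_card_filter_not]

end OrderThree

section CubicMap

variable {F : Type*} [Field F]

lemma deck_formula_sub_self {w x : F} (hx : x ≠ 0) : w * (x - w) / x - w = -w ^ 2 / x := by
  field_simp
  ring

lemma deck_formula_ne {w x : F} (hw : w ≠ 0) (h0 : x ≠ 0) (hxw : x ≠ w) :
    w * (x - w) / x ≠ 0 ∧ w * (x - w) / x ≠ w := by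
  refine ⟨by simp [hw, h0, sub_eq_zero, hxw], fun h => ?_⟩
  have : -w ^ 2 / x ≠ 0 := by simp [hw, h0]
  rw [← deck_formula_sub_self h0, h, sub_self] at this
  exact this rfl

variable [DecidableEq F]

lemma card_le_natDegree_of_isRoot {P : F[X]} (hP : P ≠ 0) {s : Finset (Option F)}
    (hs : ∀ x ∈ s, ∃ t, x = some t ∧ P.IsRoot t) : #s ≤ P.natDegree := by
  have hsub : s ⊆ P.roots.toFinset.map .some := fun x hx => by
    obtain ⟨t, rfl, ht⟩ := hs x hx
    simpa [hP] using ht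
  calc #s ≤ #(P.roots.toFinset.map .some) := card_le_card hsub
    _ = #P.roots.toFinset := card_map _
    _ ≤ P.natDegree := P.roots.toFinset_card_le.trans P.card_roots'

noncomputable def cubicMap (w : F) : Option F → Option F :=
  ratEval (X ^ 3 - C (3 * w ^ 2) * X + C (w ^ 3)) (X * (X - C w))

def deck (w : F) : Option F → Option F
  | none => some w
  | some x => if x = 0 then none else some (w * (x - w) / x)

variable {w : F}

lemma cubicMap_none : cubicMap w none = none := by
  have h3 : (X ^ 3 - C (3 * w ^ 2) * X + C (w ^ 3) : F[X]).natDegree = 3 := by compute_degree!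
  have h2 : (X * (X - C w) : F[X]).natDegree = 2 := by compute_degree!
  simp only [cubicMap, ratEval, h2, h3]
  norm_num

lemma cubicMap_some (x : F) : cubicMap w (some x) =
    if x * (x - w) = 0 then none
    else some ((x ^ 3 - 3 * w ^ 2 * x + w ^ 3) / (x * (x - w))) := by
  simp [cubicMap, ratEval]

lemma cubicMap_eq_none_iff {x : Option F} :
    cubicMap w x = none ↔ x = none ∨ x = some 0 ∨ x = some w := by
  cases x with
  | none => simp [cubicMap_none]
  | some t => by_cases t = 0 <;> simp [cubicMap_some, sub_eq_zero, *]

@[simp] lemma deck_none : deck w none = some w := rfl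

@[simp] lemma deck_some_zero : deck w (some 0) = none := by simp [deck]

lemma deck_some {x : F} (hx : x ≠ 0) : deck w (some x) = some (w * (x - w) / x) := by
  simp [deck, hx]

@[simp] lemma deck_some_self (hw : w ≠ 0) : deck w (some w) = some 0 := by
  simp [deck_some hw]

lemma deck_deck_deck (hw : w ≠ 0) (x : Option F) : deck w (deck w (deck w x)) = x := by
  rcases x with _ | x
  · simp [hw]
  by_cases h0 : x = 0
  · simp [h0, hw]
  by_cases hxw : x = w
  · simp [hxw, hw]
  obtain ⟨hy0, hyw⟩ := deck_formula_ne hw h0 hxw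
  rw [deck_some h0, deck_some hy0, deck_some (deck_formula_ne hw hy0 hyw).1,
    deck_formula_sub_self hy0, deck_formula_sub_self h0]
  congr 1
  field_simp

lemma cubicMap_deck (hw : w ≠ 0) (x : Option F) : cubicMap w (deck w x) = cubicMap w x := by
  have hpoles {x y : Option F} (hx : x = none ∨ x = some 0 ∨ x = some w)
      (hy : y = none ∨ y = some 0 ∨ y = some w) : cubicMap w x = cubicMap w y := by
    rw [cubicMap_eq_none_iff.2 hx, cubicMap_eq_none_iff.2 hy]
  rcases x with _ | x
  · exact hpoles (by simp) (by simp)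
  by_cases h0 : x = 0
  · exact hpoles (by simp [h0]) (by simp [h0])
  by_cases hxw : x = w
  · exact hpoles (by simp [hxw, hw]) (by simp [hxw])
  obtain ⟨hy0, hyw⟩ := deck_formula_ne hw h0 hxw
  have hxw' := sub_ne_zero.2 hxw
  have hyw' := sub_ne_zero.2 hyw
  simp only [deck_some h0, cubicMap_some, mul_eq_zero, hy0, hyw', h0, hxw', or_self, if_false]
  rw [deck_formula_sub_self h0]
  congr 1
  field_simp
  ring

lemma isRoot_of_deck_eq_self {x : Option F} (h : deck w x = x) :
    ∃ t, x = some t ∧ (X ^ 2 - C w * X + C (w ^ 2)).IsRoot t := by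
  rcases x with _ | t
  · simp at h
  by_cases h0 : t = 0
  · simp [h0] at h
  rw [deck_some h0, Option.some.injEq, div_eq_iff h0] at h
  exact ⟨t, rfl, by simp; linear_combination -h⟩

variable [Fintype F]

lemma card_deck_fixed_le_two : #{x | deck w x = x} ≤ 2 := by
  have hP : (X ^ 2 - C w * X + C (w ^ 2) : F[X]).natDegree = 2 := by compute_degree!
  rw [← hP]
  refine card_le_natDegree_of_isRoot (ne_zero_of_natDegree_gt (n := 0) (by omega)) fun x hx => ?_
  exact isRoot_of_deck_eq_self (mem_filter.1 hx).2

lemma card_fiber_cubicMap_le_three (b : Option F) : #{x | cubicMap w x = b} ≤ 3 := by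
  rcases b with _ | c
  · have hpoles : ({x | cubicMap w x = none} : Finset (Option F)) ⊆ {none, some 0, some w} :=
      fun x hx => by simpa [cubicMap_eq_none_iff] using (mem_filter.1 hx).2
    exact (card_le_card hpoles).trans card_le_three
  have hP : (X ^ 3 - C (3 * w ^ 2) * X + C (w ^ 3) - C c * (X * (X - C w)) : F[X]).natDegree
      = 3 := by
    compute_degree!
  rw [← hP]
  refine card_le_natDegree_of_isRoot (ne_zero_of_natDegree_gt (n := 0) (by omega)) fun x hx => ?_
  have hx := (mem_filter.1 hx).2
  rcases x with _ | t
  · simp [cubicMap_none] at hx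
  rw [cubicMap_some] at hx
  split_ifs at hx with hd
  rw [Option.some.injEq, div_eq_iff hd] at hx
  exact ⟨t, rfl, by simp; linear_combination hx⟩

theorem card_cubicMap_fibers_eq_three (hw : w ≠ 0) :
    #{b | #{x | cubicMap w x = b} = 3} = (Fintype.card F + 1) / 3 := by
  have hcount := three_mul_card_fibers_add_card_fixed (deck_deck_deck hw) (cubicMap_deck hw)
    card_fiber_cubicMap_le_three card_deck_fixed_le_two
  have hfix := card_deck_fixed_le_two (w := w)
  rw [Fintype.card_option] at hcount
  omega

end CubicMap

/-- Let `w ∈ F_q*` and consider `h = (X³ - 3w²X + w³)/(X(X - w))` as a map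
`P¹(F_q) → P¹(F_q)`.  The number of `b ∈ P¹(F_q)` whose fiber `h⁻¹(b)` has exactly
`3` elements equals `q/3` if `q ≡ 0 (mod 3)`, `(q-1)/3` if `q ≡ 1 (mod 3)`, and
`(q+1)/3` if `q ≡ 2 (mod 3)`; in particular `h` is `(2,l)`-good with the
corresponding `l`. -/
theorem stmt13 {F : Type*} [Field F] [Fintype F] [DecidableEq F] (w : F) (hw : w ≠ 0) :
    (Fintype.card F % 3 = 0 →
      (Finset.univ.filter (fun b : Option F =>
        (Finset.univ.filter (fun x : Option F =>
          ratEval (X ^ 3 - C (3 * w ^ 2) * X + C (w ^ 3)) (X * (X - C w)) x = b)).card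
          = 3)).card = Fintype.card F / 3) ∧
    (Fintype.card F % 3 = 1 →
      (Finset.univ.filter (fun b : Option F =>
        (Finset.univ.filter (fun x : Option F =>
          ratEval (X ^ 3 - C (3 * w ^ 2) * X + C (w ^ 3)) (X * (X - C w)) x = b)).card
          = 3)).card = (Fintype.card F - 1) / 3) ∧
    (Fintype.card F % 3 = 2 →
      (Finset.univ.filter (fun b : Option F =>
        (Finset.univ.filter (fun x : Option F =>
          ratEval (X ^ 3 - C (3 * w ^ 2) * X + C (w ^ 3)) (X * (X - C w)) x = b)).card
          = 3)).card = (Fintype.card F + 1) / 3) := by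
  have h := card_cubicMap_fibers_eq_three hw
  unfold cubicMap at h
  omega
end

section
/- Let q be a prime power and let h = f/g be a rational function over F_q with f, g coprime and deg h = max(deg f, deg g) ≥ 2. Suppose h is good, i.e., there exists P ∈ P¹(F_q) with #h⁻¹(P) = deg h. Then there exists b ∈ F_q such that b ∉ h(P¹(F_q)) or b ∉ (1/h)(P¹(F_q)), where 1/h denotes the rational function g/f viewed as a map on P¹(F_q). -/
open Polynomial Finset

/-- If `h = f/g` (with `f, g` coprime, `deg h ≥ 2`) is good, i.e. some fiber of the
induced map on `P¹(F_q)` has exactly `deg h` elements, then there exists `b ∈ F_q`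
avoided by the image of `h` or by the image of `1/h = g/f` on `P¹(F_q)`. -/
theorem stmt18 {F : Type*} [Field F] [Fintype F] [DecidableEq F]
    (f g : Polynomial F) (hcop : IsCoprime f g)
    (hdeg : 2 ≤ max f.natDegree g.natDegree)
    (hgood : ∃ P : Option F,
        (Finset.univ.filter (fun x : Option F => ratEval f g x = P)).card
          = max f.natDegree g.natDegree) :
    ∃ b : F, (∀ P : Option F, ratEval f g P ≠ some b) ∨
      (∀ P : Option F, ratEval g f P ≠ some b) := by
  have hf0 : f ≠ 0 := by
    rintro rfl
    have hg : IsUnit g := (isCoprime_zero_left).1 hcop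
    have := Polynomial.natDegree_eq_zero_of_isUnit hg
    simp [this] at hdeg
  have hg0 : g ≠ 0 := by
    rintro rfl
    have hf : IsUnit f := (isCoprime_zero_right).1 hcop
    have := Polynomial.natDegree_eq_zero_of_isUnit hf
    simp [this] at hdeg
  have hnoshare : ∀ x : F, g.eval x = 0 → f.eval x ≠ 0 := by
    intro x hgx hfx
    obtain ⟨u, v, huv⟩ := hcop
    have := congrArg (Polynomial.eval x) huv
    simp [hgx, hfx] at this
  by_contra hcon
  push_neg at hcon
  have hsurj : Function.Surjective (ratEval f g) := by
    intro P
    match P with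
    | some b => exact (hcon b).1
    | none =>
      by_contra hnone
      push_neg at hnone
      obtain ⟨Q, hQ⟩ := (hcon 0).2
      match Q with
      | some x =>
        by_cases hfx : f.eval x = 0
        · simp [ratEval, hfx] at hQ
        · simp only [ratEval, if_neg hfx, Option.some.injEq] at hQ
          rcases _root_.div_eq_zero_iff.1 hQ with h | h
          · exact hnone (some x) (by simp [ratEval, h])
          · exact hfx h
      | none =>
        rcases lt_trichotomy f.natDegree g.natDegree with h1 | h1 | h1
        · simp [ratEval, h1] at hQ
        · have hflc : f.leadingCoeff ≠ 0 := Polynomial.leadingCoeff_ne_zero.2 hf0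
          have hglc : g.leadingCoeff ≠ 0 := Polynomial.leadingCoeff_ne_zero.2 hg0
          simp [ratEval, h1, _root_.div_eq_zero_iff] at hQ
          tauto
        · exact hnone none (by simp [ratEval, h1])
  have hinj : Function.Injective (ratEval f g) :=
    Finite.injective_iff_surjective.2 hsurj
  obtain ⟨P, hP⟩ := hgood
  have hle : (Finset.univ.filter (fun x : Option F => ratEval f g x = P)).card ≤ 1 := by
    apply Finset.card_le_one.2
    intro a ha b hb
    simp only [Finset.mem_filter] at ha hb
    exact hinj (ha.2.trans hb.2.symm)
  omega
end
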